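/- arXiv:1403.7026 — 7 statements merged into one kernel-verified Lean document; each statement's English description precedes it below -/
import Mathlib

section
/- Let q be an odd prime power, ξ a nonsquare in F_q, a ∈ F_{q^3}* with N_{q^3/q}(a) ∉ {1, -1}, and r ∈ {1,2}. Then for all (x,y) ∈ F_{q^3}² with (x,y) ≠ (0,0), one has ξ·x·A_{a,r}(x) ≠ y·A_{a,r}(y), where A_{a,r}(z) = z^{q^r} - a·z^{q^{3-r}}. Equivalently, the multiplication (u,v) ⋆ (x,y) = (ux + v·A_{a,r}(y), uy + ξ·v·A_{a,r}(x)) on F_{q^3} × F_{q^3} has no zero divisors. -/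
/-!
Let `σ` be the `q`-Frobenius of `F_{q^3}`, so `σ³ = 1`, and let `N z = z σ(z) σ²(z)`. With
`Q = ξ x σ(x) - y σ(y)`, the equation `ξ x A_{a,r}(x) = y A_{a,r}(y)` reads `Q = a σ²(Q)` for `r = 1`
and `σ²(Q) = a Q` for `r = 2`. Going once around the 3-cycle of `σ` gives `Q = N(a) Q`, hence
`Q = 0` because `N(a) ≠ 1`. Taking norms in `ξ x σ(x) = y σ(y)` then gives `ξ³ N(x)² = N(y)²`, so for
`x ≠ 0` the element `ξ` is the square of `N(y) / (ξ N(x)) ∈ F_q`.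
-/

section CommRing

variable {K : Type*} [CommRing K]

def cubicNorm (σ : K →+* K) (z : K) : K := z * σ z * σ (σ z)

def dempwolffA (σ : K →+* K) (a : K) (r : ℕ) (z : K) : K := σ^[r] z - a * σ^[3 - r] z

variable {σ : K →+* K}

theorem map_cubicNorm (hσ : ∀ z, σ (σ (σ z)) = z) (z : K) :
    σ (cubicNorm σ z) = cubicNorm σ z := by
  simp only [cubicNorm, map_mul, hσ]
  ring

variable [NoZeroDivisors K]

theorem eq_zero_of_eq_mul_map_map (hσ : ∀ z, σ (σ (σ z)) = z) {α b : K}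
    (hb : cubicNorm σ b ≠ 1) (h : α = b * σ (σ α)) : α = 0 := by
  have h1 : σ α = σ b * α := by simpa only [map_mul, hσ] using congrArg σ h
  have h2 : σ (σ α) = σ (σ b) * σ α := by simpa only [map_mul] using congrArg σ h1
  have hN : cubicNorm σ b * α = α := by
    rw [cubicNorm]
    linear_combination -h - b * h2 - b * σ (σ b) * h1
  exact (mul_left_eq_self₀.mp hN).resolve_left hb

theorem eq_zero_of_map_map_eq_mul (hσ : ∀ z, σ (σ (σ z)) = z) {α b : K}
    (hb : cubicNorm σ b ≠ 1) (h : σ (σ α) = b * α) : α = 0 := by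
  have h1 : α = σ b * σ α := by simpa only [map_mul, hσ] using congrArg σ h
  have h2 : σ α = σ (σ b) * σ (σ α) := by simpa only [map_mul] using congrArg σ h1
  have hN : cubicNorm σ b * α = α := by
    rw [cubicNorm]
    linear_combination -h1 - σ b * h2 - σ b * σ (σ b) * h
  exact (mul_left_eq_self₀.mp hN).resolve_left hb

end CommRing

section Field

variable {K : Type*} [Field K] {σ : K →+* K}

theorem eq_zero_of_mul_mul_map_eq (hσ : ∀ z, σ (σ (σ z)) = z) {ξ : K} (hξ : σ ξ = ξ)
    (hξns : ¬ ∃ c, σ c = c ∧ c ^ 2 = ξ) {x y : K} (h : ξ * x * σ x = y * σ y) :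
    x = 0 ∧ y = 0 := by
  have hξ0 : ξ ≠ 0 := by
    rintro rfl
    exact hξns ⟨0, map_zero σ, by ring⟩
  by_cases hx : x = 0
  · subst hx
    simpa [eq_comm (a := (0 : K))] using h
  exfalso
  have h1 : ξ * σ x * σ (σ x) = σ y * σ (σ y) := by
    simpa only [map_mul, hξ] using congrArg σ h
  have h2 : ξ * σ (σ x) * x = σ (σ y) * y := by
    simpa only [map_mul, hξ, hσ] using congrArg σ h1
  have hnorm : ξ ^ 3 * cubicNorm σ x ^ 2 = cubicNorm σ y ^ 2 := calc
    _ = (ξ * x * σ x) * (ξ * σ x * σ (σ x)) * (ξ * σ (σ x) * x) := by rw [cubicNorm]; ring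
    _ = (y * σ y) * (σ y * σ (σ y)) * (σ (σ y) * y) := by rw [h, h1, h2]
    _ = _ := by rw [cubicNorm]; ring
  have hNx : cubicNorm σ x ≠ 0 := by simp [cubicNorm, hx]
  refine hξns ⟨cubicNorm σ y / (ξ * cubicNorm σ x), ?_, ?_⟩
  · rw [map_div₀, map_mul, hξ, map_cubicNorm hσ, map_cubicNorm hσ]
  · rw [div_pow, ← hnorm]
    field_simp

theorem eq_zero_of_mul_dempwolffA_eq (hσ : ∀ z, σ (σ (σ z)) = z) {ξ a : K} (hξ : σ ξ = ξ)
    (hξns : ¬ ∃ c, σ c = c ∧ c ^ 2 = ξ) (ha : cubicNorm σ a ≠ 1) {r : ℕ} (hr : r = 1 ∨ r = 2)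
    {x y : K} (h : ξ * x * dempwolffA σ a r x = y * dempwolffA σ a r y) : x = 0 ∧ y = 0 := by
  refine eq_zero_of_mul_mul_map_eq hσ hξ hξns (sub_eq_zero.mp ?_)
  have hQ : σ (σ (ξ * x * σ x - y * σ y)) = ξ * σ (σ x) * x - σ (σ y) * y := by
    simp only [map_sub, map_mul, hξ, hσ]
  rcases hr with rfl | rfl <;>
    simp only [dempwolffA, Function.iterate_succ_apply', Function.iterate_zero_apply] at h
  · exact eq_zero_of_eq_mul_map_map hσ ha (by rw [hQ]; linear_combination h)
  · exact eq_zero_of_map_map_eq_mul hσ ha (by rw [hQ]; linear_combination h)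

end Field

theorem stmt2_general (q : ℕ) (hq : IsPrimePow q)
    (K : Type*) [Field K] [Fintype K] (hcard : Fintype.card K = q ^ 3)
    (ξ : K) (hξq : ξ ^ q = ξ) (hξns : ¬ ∃ c : K, c ^ q = c ∧ c ^ 2 = ξ)
    (a : K)
    (hN1 : a ^ (1 + q + q ^ 2) ≠ 1)
    (r : ℕ) (hr : r = 1 ∨ r = 2) :
    ∀ x y : K, ¬ (x = 0 ∧ y = 0) →
      ξ * x * (x ^ q ^ r - a * x ^ q ^ (3 - r)) ≠
        y * (y ^ q ^ r - a * y ^ q ^ (3 - r)) := by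
  obtain ⟨p, n, hp, -, hpn⟩ := hq
  have := Fact.mk hp.nat_prime
  have := charP_of_card_eq_prime_pow (R := K) (p := p) (f := n * 3) (by rw [hcard, ← hpn, pow_mul])
  set σ := iterateFrobenius K p n
  have hσ : ∀ z, z ^ q = σ z := fun z ↦ by rw [iterateFrobenius_def, hpn]
  have hσ3 (z : K) : σ (σ (σ z)) = z := by
    rw [← hσ, ← hσ, ← hσ, ← pow_mul, ← pow_mul, show q * (q * q) = q ^ 3 by ring, ← hcard,
      FiniteField.pow_card]
  have hA (k : ℕ) (z : K) : z ^ q ^ k = σ^[k] z := by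
    rw [show (⇑σ) = (· ^ q) from funext fun z ↦ (hσ z).symm, pow_iterate]
  have ha : cubicNorm σ a ≠ 1 := by
    simpa only [cubicNorm, pow_add, pow_one, sq, pow_mul, hσ] using hN1
  intro x y hxy heq
  refine hxy (eq_zero_of_mul_dempwolffA_eq hσ3 (hσ ξ ▸ hξq)
    (by simpa only [hσ] using hξns) ha hr ?_)
  simpa only [dempwolffA, hA] using heq

/-- the Dempwolff presemifield `D_A` has no zero divisors:
for `(x,y) ≠ (0,0)`, `ξ x A_{a,r}(x) ≠ y A_{a,r}(y)`. -/
theorem stmt2 (q : ℕ) (hq : IsPrimePow q) (hodd : Odd q)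
    (K : Type*) [Field K] [Fintype K] (hcard : Fintype.card K = q ^ 3)
    (ξ : K) (hξq : ξ ^ q = ξ) (hξns : ¬ ∃ c : K, c ^ q = c ∧ c ^ 2 = ξ)
    (a : K) (ha : a ≠ 0)
    (hN1 : a ^ (1 + q + q ^ 2) ≠ 1) (hN2 : a ^ (1 + q + q ^ 2) ≠ -1)
    (r : ℕ) (hr : r = 1 ∨ r = 2) :
    ∀ x y : K, ¬ (x = 0 ∧ y = 0) →
      ξ * x * (x ^ q ^ r - a * x ^ q ^ (3 - r)) ≠
        y * (y ^ q ^ r - a * y ^ q ^ (3 - r)) :=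
  stmt2_general q hq K hcard ξ hξq hξns a hN1 r hr
end

section
/- Let q be an odd prime power, ξ a nonsquare in F_q, and a ∈ F_{q^3}* with N_{q^3/q}(a) ∉ {-1, 1}. In PG(3, q^3) the two lines t_1 : {X_2 = -a^{q^r+1}·X_1, X_3 = -ξ·a^{q^r+1}·X_0} and t_2 : {X_1 = a^{q^{3-r}}·X_2, X_0 = (a^{q^{3-r}}/ξ)·X_3} are disjoint and both are external to (i.e., contain no point of) the hyperbolic quadric Q : X_0·X_3 - X_1·X_2 = 0. -/
/-!
A nonsquare `ξ` of `𝔽_q` stays a nonsquare in the odd-degree extension `𝔽_{q³}`: a square root `c`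
would satisfy `c^q = ±c`, and `c^q = -c` forces `c = c^{q³} = -c`. On `t₁` the quadratic form
`X₀X₃ - X₁X₂` restricts to `A (X₁² - ξ X₀²)` with `A = a^{q^r+1}`, and on `t₂` to
`(B/ξ) (X₃² - ξ X₂²)` with `B = a^{q^{3-r}}`, so both forms are anisotropic. The two lines meet
only where `(1 + AB) X = 0`, and `AB = N(a) ≠ -1`.
-/

theorem pow_pow_eq_neg_one_pow_mul {R : Type*} [CommRing R] {q : ℕ} (hq : Odd q) {c : R}
    (hc : c ^ q = -c) (k : ℕ) : c ^ q ^ k = (-1) ^ k * c := by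
  induction k with
  | zero => simp
  | succ k ih =>
    rw [pow_succ, pow_mul, ih, mul_pow, ← pow_mul, mul_comm k, pow_mul, hq.neg_one_pow, hc]
    ring

theorem FiniteField.sq_ne_of_card_eq_odd_pow {K : Type*} [Field K] [Fintype K] {q n : ℕ}
    (hq : Odd q) (hn : Odd n) (hcard : Fintype.card K = q ^ n) {ξ : K} (hξq : ξ ^ q = ξ)
    (hξ : ¬ ∃ c : K, c ^ q = c ∧ c ^ 2 = ξ) (c : K) : c ^ 2 ≠ ξ := by
  intro hc
  have hc0 : c ≠ 0 := by
    rintro rfl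
    exact hξ ⟨0, zero_pow hq.pos.ne', hc⟩
  have hcq : (c ^ q) ^ 2 = c ^ 2 := by rw [← pow_mul, mul_comm, pow_mul, hc, hξq]
  rcases sq_eq_sq_iff_eq_or_eq_neg.mp hcq with hfix | hneg
  · exact hξ ⟨c, hfix, hc⟩
  · have hchar : ringChar K ≠ 2 := by
      rw [Ne, FiniteField.even_card_iff_char_two, hcard, ← Nat.even_iff, Nat.not_even_iff_odd]
      exact hq.pow
    have hself : c = -c := by
      have hfrob : c ^ q ^ n = c := hcard ▸ FiniteField.pow_card c
      rw [pow_pow_eq_neg_one_pow_mul hq hneg, hn.neg_one_pow, neg_one_mul] at hfrob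
      exact hfrob.symm
    exact hc0 ((mul_eq_zero.mp (by linear_combination hself : (2 : K) * c = 0)).resolve_left
      (Ring.two_ne_zero hchar))

theorem eq_zero_of_sq_eq_mul_sq {K : Type*} [Field K] {ξ x y : K} (hξ : ∀ c : K, c ^ 2 ≠ ξ)
    (h : x ^ 2 = ξ * y ^ 2) : x = 0 ∧ y = 0 := by
  by_cases hy : y = 0
  · subst hy
    exact ⟨pow_eq_zero_iff two_ne_zero |>.mp (by simpa using h), rfl⟩
  · exact absurd (by rw [div_pow, h]; field_simp) (hξ (x / y))

section Lines

variable {K : Type*} [Field K] {ξ A B : K}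

theorem t₁_t₂_disjoint (hξ : ξ ≠ 0) (hAB : 1 + A * B ≠ 0) (x0 x1 x2 x3 : K)
    (ht₁ : x2 = -A * x1 ∧ x3 = -ξ * A * x0) (ht₂ : x1 = B * x2 ∧ x0 = B / ξ * x3) :
    x0 = 0 ∧ x1 = 0 ∧ x2 = 0 ∧ x3 = 0 := by
  obtain ⟨h2, h3⟩ := ht₁
  obtain ⟨h1, h0⟩ := ht₂
  have h1' : (1 + A * B) * x1 = 0 := by rw [h2] at h1; linear_combination h1
  have h0' : (1 + A * B) * x0 = 0 := by
    rw [h3] at h0; field_simp at h0; linear_combination h0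
  have hx1 := (mul_eq_zero.mp h1').resolve_left hAB
  have hx0 := (mul_eq_zero.mp h0').resolve_left hAB
  exact ⟨hx0, hx1, by rw [h2, hx1, mul_zero], by rw [h3, hx0, mul_zero]⟩

theorem t₁_external (hξ : ∀ c : K, c ^ 2 ≠ ξ) (hA : A ≠ 0) (x0 x1 x2 x3 : K)
    (ht₁ : x2 = -A * x1 ∧ x3 = -ξ * A * x0) (hx : ¬ (x0 = 0 ∧ x1 = 0 ∧ x2 = 0 ∧ x3 = 0)) :
    x0 * x3 - x1 * x2 ≠ 0 := by
  obtain ⟨h2, h3⟩ := ht₁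
  intro hquad
  have hform : A * (x1 ^ 2 - ξ * x0 ^ 2) = 0 := by rw [h2, h3] at hquad; linear_combination hquad
  obtain ⟨hx1, hx0⟩ := eq_zero_of_sq_eq_mul_sq hξ
    (sub_eq_zero.mp ((mul_eq_zero.mp hform).resolve_left hA))
  exact hx ⟨hx0, hx1, by rw [h2, hx1, mul_zero], by rw [h3, hx0, mul_zero]⟩

theorem t₂_external (hξ : ∀ c : K, c ^ 2 ≠ ξ) (hB : B ≠ 0) (x0 x1 x2 x3 : K)
    (ht₂ : x1 = B * x2 ∧ x0 = B / ξ * x3) (hx : ¬ (x0 = 0 ∧ x1 = 0 ∧ x2 = 0 ∧ x3 = 0)) :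
    x0 * x3 - x1 * x2 ≠ 0 := by
  obtain ⟨h1, h0⟩ := ht₂
  have hξ0 : ξ ≠ 0 := fun h ↦ hξ 0 (by rw [h, sq, mul_zero])
  intro hquad
  have hform : B / ξ * (x3 ^ 2 - ξ * x2 ^ 2) = 0 := by
    rw [h1, h0] at hquad; field_simp at hquad ⊢; linear_combination hquad
  obtain ⟨hx3, hx2⟩ := eq_zero_of_sq_eq_mul_sq hξ
    (sub_eq_zero.mp ((mul_eq_zero.mp hform).resolve_left (div_ne_zero hB hξ0)))
  exact hx ⟨by rw [h0, hx3, mul_zero], by rw [h1, hx2, mul_zero], hx2, hx3⟩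

end Lines

theorem stmt3_general (q : ℕ) (hodd : Odd q)
    (K : Type*) [Field K] [Fintype K] (hcard : Fintype.card K = q ^ 3)
    (ξ : K) (hξq : ξ ^ q = ξ) (hξns : ¬ ∃ c : K, c ^ q = c ∧ c ^ 2 = ξ)
    (a : K) (ha : a ≠ 0)
    (hN2 : a ^ (1 + q + q ^ 2) ≠ -1)
    (r : ℕ) (hr : r = 1 ∨ r = 2) :
    -- t1 and t2 are disjoint (the underlying planes meet only in 0)
    (∀ x0 x1 x2 x3 : K,
      (x2 = -a ^ (q ^ r + 1) * x1 ∧ x3 = -ξ * a ^ (q ^ r + 1) * x0) →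
      (x1 = a ^ q ^ (3 - r) * x2 ∧ x0 = a ^ q ^ (3 - r) / ξ * x3) →
      x0 = 0 ∧ x1 = 0 ∧ x2 = 0 ∧ x3 = 0) ∧
    -- t1 is external to the quadric
    (∀ x0 x1 x2 x3 : K,
      (x2 = -a ^ (q ^ r + 1) * x1 ∧ x3 = -ξ * a ^ (q ^ r + 1) * x0) →
      ¬ (x0 = 0 ∧ x1 = 0 ∧ x2 = 0 ∧ x3 = 0) →
      x0 * x3 - x1 * x2 ≠ 0) ∧
    -- t2 is external to the quadric
    (∀ x0 x1 x2 x3 : K,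
      (x1 = a ^ q ^ (3 - r) * x2 ∧ x0 = a ^ q ^ (3 - r) / ξ * x3) →
      ¬ (x0 = 0 ∧ x1 = 0 ∧ x2 = 0 ∧ x3 = 0) →
      x0 * x3 - x1 * x2 ≠ 0) := by
  have hsq : ∀ c : K, c ^ 2 ≠ ξ :=
    FiniteField.sq_ne_of_card_eq_odd_pow hodd (by decide) hcard hξq hξns
  have hξ0 : ξ ≠ 0 := fun h ↦ hsq 0 (by rw [h, sq, mul_zero])
  have hnorm : a ^ (q ^ r + 1) * a ^ q ^ (3 - r) = a ^ (1 + q + q ^ 2) := by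
    rw [← pow_add]
    rcases hr with rfl | rfl <;> ring_nf
  have hAB : 1 + a ^ (q ^ r + 1) * a ^ q ^ (3 - r) ≠ 0 := by
    rw [hnorm]
    exact fun h ↦ hN2 (eq_neg_of_add_eq_zero_right h)
  exact ⟨t₁_t₂_disjoint hξ0 hAB, t₁_external hsq (pow_ne_zero _ ha),
    t₂_external hsq (pow_ne_zero _ ha)⟩

/-- the lines `t_1` and `t_2` are disjoint and both external to
the hyperbolic quadric `X_0 X_3 - X_1 X_2 = 0` of `PG(3,q^3)`. -/
theorem stmt3 (q : ℕ) (hq : IsPrimePow q) (hodd : Odd q)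
    (K : Type*) [Field K] [Fintype K] (hcard : Fintype.card K = q ^ 3)
    (ξ : K) (hξq : ξ ^ q = ξ) (hξns : ¬ ∃ c : K, c ^ q = c ∧ c ^ 2 = ξ)
    (a : K) (ha : a ≠ 0)
    (hN1 : a ^ (1 + q + q ^ 2) ≠ 1) (hN2 : a ^ (1 + q + q ^ 2) ≠ -1)
    (r : ℕ) (hr : r = 1 ∨ r = 2) :
    -- t1 and t2 are disjoint (the underlying planes meet only in 0)
    (∀ x0 x1 x2 x3 : K,
      (x2 = -a ^ (q ^ r + 1) * x1 ∧ x3 = -ξ * a ^ (q ^ r + 1) * x0) →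
      (x1 = a ^ q ^ (3 - r) * x2 ∧ x0 = a ^ q ^ (3 - r) / ξ * x3) →
      x0 = 0 ∧ x1 = 0 ∧ x2 = 0 ∧ x3 = 0) ∧
    -- t1 is external to the quadric
    (∀ x0 x1 x2 x3 : K,
      (x2 = -a ^ (q ^ r + 1) * x1 ∧ x3 = -ξ * a ^ (q ^ r + 1) * x0) →
      ¬ (x0 = 0 ∧ x1 = 0 ∧ x2 = 0 ∧ x3 = 0) →
      x0 * x3 - x1 * x2 ≠ 0) ∧
    -- t2 is external to the quadric
    (∀ x0 x1 x2 x3 : K,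
      (x1 = a ^ q ^ (3 - r) * x2 ∧ x0 = a ^ q ^ (3 - r) / ξ * x3) →
      ¬ (x0 = 0 ∧ x1 = 0 ∧ x2 = 0 ∧ x3 = 0) →
      x0 * x3 - x1 * x2 ≠ 0) :=
  stmt3_general q hodd K hcard ξ hξq hξns a ha hN2 r hr
end

section
/- Let q be an odd prime power and let the map φ : F_{q^3}^4 → F_{q^6}^2 be defined by φ(x_0,x_1,x_2,x_3) = (x_0 + x_3 + (x_1 + ξ·x_2)·ω, x_0 - x_3 + (x_1 - ξ·x_2)·ω), where ξ ∈ F_q is a nonsquare and ω ∈ F_{q^2} ⊂ F_{q^6} satisfies ω² = 1/ξ. Then φ is an F_{q^3}-linear bijection, and a nonzero vector (x_0,x_1,x_2,x_3) satisfies x_0·x_3 - x_1·x_2 = 0 if and only if its image (X, Y) = φ(x_0,x_1,x_2,x_3) satisfies X^{q^3+1} - Y^{q^3+1} = 0. -/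
/-!
Write `N = #K` and `ι = algebraMap K L`. Since `ω²` lies in `K` and `ω^N ≠ ω`, the Frobenius
`x ↦ x^N` (a `K`-algebra endomorphism of `L`) sends `ω` to `-ω`, and hence `ι a + ι b ω` to
`ι a - ι b ω`. Therefore `1, ω` are `K`-linearly independent, and
`(ι a + ι b ω)^(N+1) = ι a² - ι b² ω² = ι (a² - b²/ξ)`. Applied to the two coordinates of `φ v`
this gives `X^(N+1) - Y^(N+1) = ι (4 (x₀x₃ - x₁x₂))`, while linear independence makes `φ`
injective, hence bijective by counting.
-/

open FiniteField

lemma FiniteField.two_ne_zero_of_odd_card {K : Type*} [Field K] [Fintype K]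
    (h : Odd (Fintype.card K)) : (2 : K) ≠ 0 :=
  Ring.two_ne_zero <| by
    rw [Ne, even_card_iff_char_two, Nat.odd_iff.1 h]
    exact one_ne_zero

section Frobenius

variable {K L : Type*} [Field K] [Fintype K] [Field L] [Algebra K L]

local notation "ι" => algebraMap K L

lemma algebraMap_pow_card (a : K) : ι a ^ Fintype.card K = ι a := by
  rw [← map_pow, pow_card]

lemma pow_card_eq_neg_of_sq_mem_range {ω : L} (a : K) (hsq : ω ^ 2 = ι a)
    (hne : ω ^ Fintype.card K ≠ ω) : ω ^ Fintype.card K = -ω := by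
  have hsq' : (ω ^ Fintype.card K) ^ 2 = ω ^ 2 := by
    rw [← pow_mul, mul_comm, pow_mul, hsq, algebraMap_pow_card]
  exact (sq_eq_sq_iff_eq_or_eq_neg.1 hsq').resolve_left hne

variable {ω : L} (hω : ω ^ Fintype.card K = -ω)
include hω

lemma algebraMap_add_mul_pow_card (a b : K) :
    (ι a + ι b * ω) ^ Fintype.card K = ι a - ι b * ω := by
  have := map_add (frobeniusAlgHom K L) (ι a) (ι b * ω)
  simp only [frobeniusAlgHom_apply, mul_pow, algebraMap_pow_card, hω] at this
  rw [this, mul_neg, sub_eq_add_neg]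

lemma algebraMap_add_mul_pow_card_succ (a b : K) :
    (ι a + ι b * ω) ^ (Fintype.card K + 1) = ι a ^ 2 - ι b ^ 2 * ω ^ 2 := by
  rw [pow_succ, algebraMap_add_mul_pow_card hω]
  ring

lemma eq_zero_of_algebraMap_add_mul_eq_zero (h2 : (2 : K) ≠ 0) (hω0 : ω ≠ 0) {a b : K}
    (h : ι a + ι b * ω = 0) : a = 0 ∧ b = 0 := by
  have hconj : ι a - ι b * ω = 0 := by
    rw [← algebraMap_add_mul_pow_card hω, h, zero_pow Fintype.card_ne_zero]
  have h2b : ι (2 * b) * ω = 0 := by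
    rw [map_mul, map_ofNat]
    linear_combination h - hconj
  have hb : b = 0 := by
    simpa [h2, hω0] using h2b
  subst hb
  simpa using h

end Frobenius

section QuadricMap

variable {K L : Type*}

/-- The map `φ` of the statement. -/
def quadricMap [CommRing K] [CommRing L] [Algebra K L] (ξ : K) (ω : L) :
    (K × K × K × K) →ₗ[K] L × L where
  toFun v :=
    (algebraMap K L (v.1 + v.2.2.2) + algebraMap K L (v.2.1 + ξ * v.2.2.1) * ω,
     algebraMap K L (v.1 - v.2.2.2) + algebraMap K L (v.2.1 - ξ * v.2.2.1) * ω)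
  map_add' u v := by
    ext <;> simp only [Prod.fst_add, Prod.snd_add, map_add, map_sub, map_mul] <;> ring
  map_smul' c v := by
    ext <;>
      simp only [Prod.smul_fst, Prod.smul_snd, smul_eq_mul, RingHom.id_apply, map_add, map_sub,
        map_mul] <;> rw [Algebra.smul_def] <;> ring

variable [Field K] [Fintype K] [Field L] [Algebra K L] {ξ : K} {ω : L}

lemma quadricMap_injective (h2 : (2 : K) ≠ 0) (hξ : ξ ≠ 0) (hω0 : ω ≠ 0)
    (hω : ω ^ Fintype.card K = -ω) : Function.Injective (quadricMap ξ ω) := by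
  refine (injective_iff_map_eq_zero _).2 fun ⟨x₀, x₁, x₂, x₃⟩ h => ?_
  obtain ⟨e₁, e₂⟩ := eq_zero_of_algebraMap_add_mul_eq_zero hω h2 hω0 congr(Prod.fst $h)
  obtain ⟨e₃, e₄⟩ := eq_zero_of_algebraMap_add_mul_eq_zero hω h2 hω0 congr(Prod.snd $h)
  have h₀ : x₀ = 0 := mul_left_cancel₀ h2 (by linear_combination e₁ + e₃)
  have h₁ : x₁ = 0 := mul_left_cancel₀ h2 (by linear_combination e₂ + e₄)
  have h₂ : x₂ = 0 := mul_left_cancel₀ (mul_ne_zero h2 hξ) (by linear_combination e₂ - e₄)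
  have h₃ : x₃ = 0 := mul_left_cancel₀ h2 (by linear_combination e₁ - e₃)
  simp [h₀, h₁, h₂, h₃]

lemma quadricMap_norm_sub_norm (hξ : ξ ≠ 0) (hω : ω ^ Fintype.card K = -ω)
    (hωsq : ω ^ 2 = (algebraMap K L ξ)⁻¹) (v : K × K × K × K) :
    (quadricMap ξ ω v).1 ^ (Fintype.card K + 1) - (quadricMap ξ ω v).2 ^ (Fintype.card K + 1) =
      algebraMap K L (4 * (v.1 * v.2.2.2 - v.2.1 * v.2.2.1)) := by
  have hιξ : algebraMap K L ξ ≠ 0 := (map_ne_zero _).2 hξ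
  simp only [quadricMap, LinearMap.coe_mk, AddHom.coe_mk, algebraMap_add_mul_pow_card_succ hω,
    hωsq]
  simp only [map_add, map_sub, map_mul, map_ofNat]
  field_simp
  ring

lemma quadricMap_quadric_iff (h2 : (2 : K) ≠ 0) (hξ : ξ ≠ 0) (hω : ω ^ Fintype.card K = -ω)
    (hωsq : ω ^ 2 = (algebraMap K L ξ)⁻¹) (v : K × K × K × K) :
    v.1 * v.2.2.2 - v.2.1 * v.2.2.1 = 0 ↔
      (quadricMap ξ ω v).1 ^ (Fintype.card K + 1) -
        (quadricMap ξ ω v).2 ^ (Fintype.card K + 1) = 0 := by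
  have h4 : (4 : K) ≠ 0 := by
    rw [← two_add_two_eq_four, ← two_mul]
    exact mul_ne_zero h2 h2
  rw [quadricMap_norm_sub_norm hξ hω hωsq, map_eq_zero, mul_eq_zero, or_iff_right h4]

end QuadricMap

theorem stmt5_general (q : ℕ) (hodd : Odd q)
    (K L : Type*) [Field K] [Fintype K] [Field L] [Fintype L] [Algebra K L]
    (hK : Fintype.card K = q ^ 3) (hL : Fintype.card L = q ^ 6)
    (ξ : K)
    (ω : L) (hω2 : ω ^ q ^ 2 = ω) (hωnot : ω ^ q ≠ ω)
    (hωsq : ω ^ 2 = (algebraMap K L ξ)⁻¹) :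
    let ι := algebraMap K L
    let φ : K × K × K × K → L × L := fun v =>
      (ι (v.1 + v.2.2.2) + ι (v.2.1 + ξ * v.2.2.1) * ω,
       ι (v.1 - v.2.2.2) + ι (v.2.1 - ξ * v.2.2.1) * ω)
    Function.Bijective φ ∧
    (∀ u v : K × K × K × K, φ (u + v) = φ u + φ v) ∧
    (∀ (c : K) (v : K × K × K × K), φ (c • v) = c • φ v) ∧
    (∀ v : K × K × K × K, v ≠ 0 →
      (v.1 * v.2.2.2 - v.2.1 * v.2.2.1 = 0 ↔
        (φ v).1 ^ (q ^ 3 + 1) - (φ v).2 ^ (q ^ 3 + 1) = 0)) := by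
  intro ι φ
  have h2 : (2 : K) ≠ 0 := two_ne_zero_of_odd_card (hK ▸ hodd.pow)
  have hω0 : ω ≠ 0 := by
    rintro rfl
    exact hωnot (zero_pow hodd.pos.ne')
  have hξ : ξ ≠ 0 := by
    rintro rfl
    exact hω0 (pow_eq_zero_iff two_ne_zero |>.1 (by simpa using hωsq))
  have hω : ω ^ Fintype.card K = -ω :=
    pow_card_eq_neg_of_sq_mem_range ξ⁻¹ (by rw [hωsq, map_inv₀])
      (by rwa [hK, pow_succ, pow_mul, hω2])
  refine ⟨(Fintype.bijective_iff_injective_and_card _).2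
      ⟨quadricMap_injective h2 hξ hω0 hω, ?_⟩,
    map_add (quadricMap ξ ω), map_smul (quadricMap ξ ω),
    fun v _ => hK ▸ quadricMap_quadric_iff h2 hξ hω hωsq v⟩
  simp only [Fintype.card_prod, hK, hL]
  ring

/-- the map `φ` from `F_{q^3}^4` to `F_{q^6}^2` is an
`F_{q^3}`-linear bijection mapping the quadric `X_0X_3 - X_1X_2 = 0` onto the
quadric `X^{q^3+1} - Y^{q^3+1} = 0`. -/
theorem stmt5 (q : ℕ) (hq : IsPrimePow q) (hodd : Odd q)
    (K L : Type*) [Field K] [Fintype K] [Field L] [Fintype L] [Algebra K L]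
    (hK : Fintype.card K = q ^ 3) (hL : Fintype.card L = q ^ 6)
    (ξ : K) (hξq : ξ ^ q = ξ) (hξns : ¬ ∃ c : K, c ^ q = c ∧ c ^ 2 = ξ)
    (ω : L) (hω2 : ω ^ q ^ 2 = ω) (hωnot : ω ^ q ≠ ω)
    (hωsq : ω ^ 2 = (algebraMap K L ξ)⁻¹) :
    let ι := algebraMap K L
    let φ : K × K × K × K → L × L := fun v =>
      (ι (v.1 + v.2.2.2) + ι (v.2.1 + ξ * v.2.2.1) * ω,
       ι (v.1 - v.2.2.2) + ι (v.2.1 - ξ * v.2.2.1) * ω)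
    Function.Bijective φ ∧
    (∀ u v : K × K × K × K, φ (u + v) = φ u + φ v) ∧
    (∀ (c : K) (v : K × K × K × K), φ (c • v) = c • φ v) ∧
    (∀ v : K × K × K × K, v ≠ 0 →
      (v.1 * v.2.2.2 - v.2.1 * v.2.2.1 = 0 ↔
        (φ v).1 ^ (q ^ 3 + 1) - (φ v).2 ^ (q ^ 3 + 1) = 0)) :=
  stmt5_general q hodd K L hK hL ξ ω hω2 hωnot hωsq
end

section
/- Let q be an odd prime power, ξ a nonsquare in F_q, and b ∈ F_{q^3}* with N_{q^3/q}(b²) ∉ {-1,1}. In PG(3,q^3), the lines t_1 : {X_2 = b^{-2q^{3-r}}·X_1, X_3 = ξ·X_0} and t_2 : {b^{-2q^r}·X_2 = -b²·X_1, X_3 = -ξ·X_0} are disjoint, both external to the hyperbolic quadric Q : X_0X_3 - X_1X_2 = 0, and the intersection t_1^⊥ ∩ t_2 is exactly the single point ⟨(1,0,0,-ξ)⟩, where ⊥ is the polarity induced by Q. -/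
/-!
Write `A = b^{2q^{3-r}}` and `B = b^{2q^r}` for the coefficients of `t₁` and `t₂`, and
`N(z) = z^{1+q+q²}`. Then `A B b² = N(b²)`, so comparing `t₁` with `t₂` (or with `t₁^⊥`) forces
`x₁ (1 ± N(b²)) = 0`, and `N(b²) ≠ ∓1` kills `x₁`. On `t₁` and `t₂` the quadric restricts to
`ξ x₀² - c x₁²` with `c = A⁻¹`, resp. `c = B b²`; in both cases `N(c)` is a square of an element
of `𝔽_q`, so a zero `ξ = y² c` would give `ξ³ = N(ξ) = (N(y) g)²` with `g ∈ 𝔽_q`, making the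
nonsquare `ξ` a square in `𝔽_q`.
-/

section NormExponent

variable {K : Type*} [Field K] {q : ℕ}

theorem pow_norm_exponent_pow_q_eq [Fintype K] (hcard : Fintype.card K = q ^ 3) (z : K) :
    (z ^ (1 + q + q ^ 2)) ^ q = z ^ (1 + q + q ^ 2) := by
  have hz : z ^ q ^ 3 = z := hcard ▸ FiniteField.pow_card z
  calc (z ^ (1 + q + q ^ 2)) ^ q = z ^ q ^ 3 * z ^ (q + q ^ 2) := by
        rw [← pow_mul, ← pow_add]; ring_nf
    _ = z ^ (1 + q + q ^ 2) := by rw [hz, ← pow_succ']; ring_nf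

variable (hfix : ∀ z : K, (z ^ (1 + q + q ^ 2)) ^ q = z ^ (1 + q + q ^ 2))
include hfix

theorem pow_norm_exponent_pow_q_pow_eq (z : K) (k : ℕ) :
    (z ^ (1 + q + q ^ 2)) ^ q ^ k = z ^ (1 + q + q ^ 2) := by
  induction k with
  | zero => rw [pow_zero, pow_one]
  | succ k ih => rw [pow_succ q k, pow_mul, ih, hfix]

theorem pow_two_mul_q_pow_pow_norm_exponent (b : K) (k : ℕ) :
    (b ^ (2 * q ^ k)) ^ (1 + q + q ^ 2) = (b ^ (1 + q + q ^ 2)) ^ 2 := by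
  rw [← pow_mul, mul_right_comm, pow_mul, pow_mul, pow_norm_exponent_pow_q_pow_eq hfix, ← pow_mul,
    ← pow_mul, mul_comm]

theorem ne_sq_mul_of_norm_eq_sq {ξ e g : K} (hξ0 : ξ ≠ 0) (hξq : ξ ^ q = ξ)
    (hξns : ¬ ∃ c : K, c ^ q = c ∧ c ^ 2 = ξ) (hg : g ^ q = g)
    (he : e ^ (1 + q + q ^ 2) = g ^ 2) (y : K) : ξ ≠ y ^ 2 * e := by
  intro h
  have hnorm : ξ ^ 3 = (y ^ (1 + q + q ^ 2) * g) ^ 2 := by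
    calc ξ ^ 3 = ξ ^ (1 + q + q ^ 2) := by rw [pow_add, pow_add, sq, pow_mul, hξq, hξq]; ring
      _ = (y ^ (1 + q + q ^ 2) * g) ^ 2 := by
        rw [h, mul_pow, he, ← pow_mul, mul_comm 2, pow_mul, mul_pow]
  refine hξns ⟨y ^ (1 + q + q ^ 2) * g / ξ, ?_, ?_⟩
  · rw [div_pow, mul_pow, hfix, hg, hξq]
  · rw [div_pow, ← hnorm]
    field_simp

end NormExponent

section Lines

variable {K : Type*} [Field K]

theorem eq_zero_of_mul_sq_eq_mul_sq {ξ c x0 x1 : K} (hc : c ≠ 0) (hsq : ∀ y, ξ ≠ y ^ 2 * c)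
    (h : ξ * x0 ^ 2 = c * x1 ^ 2) : x0 = 0 ∧ x1 = 0 := by
  by_cases hx0 : x0 = 0
  · subst hx0
    simpa [hc] using h.symm
  · refine absurd ?_ (hsq (x1 / x0))
    field_simp
    linear_combination h

variable {A B b ξ : K}

theorem lines_disjoint (h2 : (2 : K) ≠ 0) (hξ0 : ξ ≠ 0) (hA : A ≠ 0) (hB : B ≠ 0)
    (hN : A * B * b ^ 2 ≠ -1) (x0 x1 x2 x3 : K) :
    (x2 = A⁻¹ * x1 ∧ x3 = ξ * x0) → (B⁻¹ * x2 = -b ^ 2 * x1 ∧ x3 = -ξ * x0) →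
      x0 = 0 ∧ x1 = 0 ∧ x2 = 0 ∧ x3 = 0 := by
  rintro ⟨h12, h13⟩ ⟨h22, h23⟩
  rw [inv_mul_eq_iff_eq_mul₀ hB] at h22
  have hx0 : x0 = 0 := by
    have : (2 * ξ) * x0 = 0 := by linear_combination h23 - h13
    simpa [h2, hξ0] using this
  have hx1 : x1 = 0 := by
    have hAx2 : A * x2 = x1 := by rw [h12, mul_inv_cancel_left₀ hA]
    have : (A * B * b ^ 2 + 1) * x1 = 0 := by linear_combination A * h22 - hAx2
    simpa [add_eq_zero_iff_eq_neg, hN] using this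
  subst hx0 hx1
  simp [h12, h13]

theorem line1_external (hA : A ≠ 0) (hsq : ∀ y, ξ ≠ y ^ 2 * A⁻¹) (x0 x1 x2 x3 : K) :
    (x2 = A⁻¹ * x1 ∧ x3 = ξ * x0) → ¬ (x0 = 0 ∧ x1 = 0 ∧ x2 = 0 ∧ x3 = 0) →
      x0 * x3 - x1 * x2 ≠ 0 := by
  rintro ⟨rfl, rfl⟩ hnz hQ
  obtain ⟨rfl, rfl⟩ :=
    eq_zero_of_mul_sq_eq_mul_sq (inv_ne_zero hA) hsq
      (show ξ * x0 ^ 2 = A⁻¹ * x1 ^ 2 by linear_combination hQ)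
  simp at hnz

theorem line2_external (hB : B ≠ 0) (hb : b ≠ 0) (hsq : ∀ y, ξ ≠ y ^ 2 * (B * b ^ 2))
    (x0 x1 x2 x3 : K) :
    (B⁻¹ * x2 = -b ^ 2 * x1 ∧ x3 = -ξ * x0) → ¬ (x0 = 0 ∧ x1 = 0 ∧ x2 = 0 ∧ x3 = 0) →
      x0 * x3 - x1 * x2 ≠ 0 := by
  rintro ⟨hx2, rfl⟩ hnz hQ
  rw [inv_mul_eq_iff_eq_mul₀ hB] at hx2
  subst hx2
  obtain ⟨rfl, rfl⟩ :=
    eq_zero_of_mul_sq_eq_mul_sq (mul_ne_zero hB (pow_ne_zero 2 hb)) hsq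
      (show ξ * x0 ^ 2 = B * b ^ 2 * x1 ^ 2 by linear_combination -hQ)
  simp at hnz

theorem perp_line1_inter_line2 (hA : A ≠ 0) (hB : B ≠ 0) (hN : A * B * b ^ 2 ≠ 1)
    (x0 x1 x2 x3 : K) (hnz : ¬ (x0 = 0 ∧ x1 = 0 ∧ x2 = 0 ∧ x3 = 0)) :
    ((∀ y0 y1 y2 y3 : K, (y2 = A⁻¹ * y1 ∧ y3 = ξ * y0) →
        x0 * y3 + x3 * y0 - x1 * y2 - x2 * y1 = 0) ∧
      (B⁻¹ * x2 = -b ^ 2 * x1 ∧ x3 = -ξ * x0)) ↔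
    ∃ c : K, c ≠ 0 ∧ x0 = c ∧ x1 = 0 ∧ x2 = 0 ∧ x3 = -c * ξ := by
  constructor
  · rintro ⟨hperp, h2, h3⟩
    rw [inv_mul_eq_iff_eq_mul₀ hB] at h2
    have hx2 : A * x2 = -x1 := by
      have := hperp 0 1 (A⁻¹ * 1) (ξ * 0) ⟨rfl, rfl⟩
      field_simp at this
      linear_combination -this
    have hx1 : x1 = 0 := by
      have : (A * B * b ^ 2 - 1) * x1 = 0 := by linear_combination A * h2 - hx2
      simpa [sub_eq_zero, hN] using this
    subst hx1 h3
    have hx2' : x2 = 0 := by simpa [hA] using hx2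
    subst hx2'
    exact ⟨x0, fun h => hnz ⟨h, rfl, rfl, by rw [h, mul_zero]⟩, rfl, rfl, rfl, by ring⟩
  · rintro ⟨c, -, rfl, rfl, rfl, rfl⟩
    refine ⟨?_, by simp, by ring⟩
    rintro y0 y1 y2 y3 ⟨-, rfl⟩
    ring

end Lines

theorem stmt9_general (q : ℕ) (hodd : Odd q)
    (K : Type*) [Field K] [Fintype K] (hcard : Fintype.card K = q ^ 3)
    (ξ : K) (hξq : ξ ^ q = ξ) (hξns : ¬ ∃ c : K, c ^ q = c ∧ c ^ 2 = ξ)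
    (b : K) (hb : b ≠ 0)
    (hN1 : b ^ (2 * (1 + q + q ^ 2)) ≠ 1) (hN2 : b ^ (2 * (1 + q + q ^ 2)) ≠ -1)
    (r : ℕ) (hr : r = 1 ∨ r = 2) :
    -- t1 and t2 are disjoint
    (∀ x0 x1 x2 x3 : K,
      (x2 = (b ^ (2 * q ^ (3 - r)))⁻¹ * x1 ∧ x3 = ξ * x0) →
      ((b ^ (2 * q ^ r))⁻¹ * x2 = -b ^ 2 * x1 ∧ x3 = -ξ * x0) →
      x0 = 0 ∧ x1 = 0 ∧ x2 = 0 ∧ x3 = 0) ∧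
    -- t1 is external to the quadric
    (∀ x0 x1 x2 x3 : K,
      (x2 = (b ^ (2 * q ^ (3 - r)))⁻¹ * x1 ∧ x3 = ξ * x0) →
      ¬ (x0 = 0 ∧ x1 = 0 ∧ x2 = 0 ∧ x3 = 0) →
      x0 * x3 - x1 * x2 ≠ 0) ∧
    -- t2 is external to the quadric
    (∀ x0 x1 x2 x3 : K,
      ((b ^ (2 * q ^ r))⁻¹ * x2 = -b ^ 2 * x1 ∧ x3 = -ξ * x0) →
      ¬ (x0 = 0 ∧ x1 = 0 ∧ x2 = 0 ∧ x3 = 0) →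
      x0 * x3 - x1 * x2 ≠ 0) ∧
    -- t1^⊥ ∩ t2 = {⟨(1,0,0,-ξ)⟩}
    (∀ x0 x1 x2 x3 : K, ¬ (x0 = 0 ∧ x1 = 0 ∧ x2 = 0 ∧ x3 = 0) →
      (((∀ y0 y1 y2 y3 : K,
          (y2 = (b ^ (2 * q ^ (3 - r)))⁻¹ * y1 ∧ y3 = ξ * y0) →
          x0 * y3 + x3 * y0 - x1 * y2 - x2 * y1 = 0) ∧
        ((b ^ (2 * q ^ r))⁻¹ * x2 = -b ^ 2 * x1 ∧ x3 = -ξ * x0)) ↔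
      (∃ c : K, c ≠ 0 ∧ x0 = c ∧ x1 = 0 ∧ x2 = 0 ∧ x3 = -c * ξ))) := by
  have h2 : (2 : K) ≠ 0 := Ring.two_ne_zero fun hchar => by
    have := FiniteField.even_card_of_char_two hchar
    rw [hcard] at this
    exact Nat.not_even_iff_odd.mpr hodd.pow (Nat.even_iff.mpr this)
  have hξ0 : ξ ≠ 0 := by
    rintro rfl
    exact hξns ⟨0, zero_pow hodd.pos.ne', by ring⟩
  have hfix := pow_norm_exponent_pow_q_eq hcard
  set A := b ^ (2 * q ^ (3 - r))
  set B := b ^ (2 * q ^ r)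
  have hA : A ≠ 0 := pow_ne_zero _ hb
  have hB : B ≠ 0 := pow_ne_zero _ hb
  have hAB : A * B * b ^ 2 = b ^ (2 * (1 + q + q ^ 2)) := by
    rw [← pow_add, ← pow_add]
    rcases hr with rfl | rfl <;> ring_nf
  have hnb : (b ^ (1 + q + q ^ 2)) ^ q = b ^ (1 + q + q ^ 2) := hfix b
  refine ⟨lines_disjoint h2 hξ0 hA hB (hAB ▸ hN2), line1_external hA fun y => ?_,
    line2_external hB hb fun y => ?_, perp_line1_inter_line2 hA hB (hAB ▸ hN1)⟩
  · refine ne_sq_mul_of_norm_eq_sq hfix hξ0 hξq hξns (g := (b ^ (1 + q + q ^ 2))⁻¹) ?_ ?_ y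
    · rw [inv_pow, hnb]
    · rw [inv_pow, pow_two_mul_q_pow_pow_norm_exponent hfix, inv_pow]
  · refine ne_sq_mul_of_norm_eq_sq hfix hξ0 hξq hξns (g := (b ^ (1 + q + q ^ 2)) ^ 2) ?_ ?_ y
    · rw [← pow_mul, mul_comm, pow_mul, hnb]
    · rw [mul_pow, pow_two_mul_q_pow_pow_norm_exponent hfix, ← pow_mul, ← pow_mul, ← pow_mul]
      ring

/-- for the `D_{AB}` presemifields, the transversal lines `t_1`
and `t_2` are disjoint, both external to the quadric `X_0X_3 - X_1X_2 = 0`,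
and `t_1^⊥ ∩ t_2` is the single point `⟨(1,0,0,-ξ)⟩`. -/
theorem stmt9 (q : ℕ) (hq : IsPrimePow q) (hodd : Odd q)
    (K : Type*) [Field K] [Fintype K] (hcard : Fintype.card K = q ^ 3)
    (ξ : K) (hξq : ξ ^ q = ξ) (hξns : ¬ ∃ c : K, c ^ q = c ∧ c ^ 2 = ξ)
    (b : K) (hb : b ≠ 0)
    (hN1 : b ^ (2 * (1 + q + q ^ 2)) ≠ 1) (hN2 : b ^ (2 * (1 + q + q ^ 2)) ≠ -1)
    (r : ℕ) (hr : r = 1 ∨ r = 2) :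
    -- t1 and t2 are disjoint
    (∀ x0 x1 x2 x3 : K,
      (x2 = (b ^ (2 * q ^ (3 - r)))⁻¹ * x1 ∧ x3 = ξ * x0) →
      ((b ^ (2 * q ^ r))⁻¹ * x2 = -b ^ 2 * x1 ∧ x3 = -ξ * x0) →
      x0 = 0 ∧ x1 = 0 ∧ x2 = 0 ∧ x3 = 0) ∧
    -- t1 is external to the quadric
    (∀ x0 x1 x2 x3 : K,
      (x2 = (b ^ (2 * q ^ (3 - r)))⁻¹ * x1 ∧ x3 = ξ * x0) →
      ¬ (x0 = 0 ∧ x1 = 0 ∧ x2 = 0 ∧ x3 = 0) →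
      x0 * x3 - x1 * x2 ≠ 0) ∧
    -- t2 is external to the quadric
    (∀ x0 x1 x2 x3 : K,
      ((b ^ (2 * q ^ r))⁻¹ * x2 = -b ^ 2 * x1 ∧ x3 = -ξ * x0) →
      ¬ (x0 = 0 ∧ x1 = 0 ∧ x2 = 0 ∧ x3 = 0) →
      x0 * x3 - x1 * x2 ≠ 0) ∧
    -- t1^⊥ ∩ t2 = {⟨(1,0,0,-ξ)⟩}
    (∀ x0 x1 x2 x3 : K, ¬ (x0 = 0 ∧ x1 = 0 ∧ x2 = 0 ∧ x3 = 0) →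
      (((∀ y0 y1 y2 y3 : K,
          (y2 = (b ^ (2 * q ^ (3 - r)))⁻¹ * y1 ∧ y3 = ξ * y0) →
          x0 * y3 + x3 * y0 - x1 * y2 - x2 * y1 = 0) ∧
        ((b ^ (2 * q ^ r))⁻¹ * x2 = -b ^ 2 * x1 ∧ x3 = -ξ * x0)) ↔
      (∃ c : K, c ≠ 0 ∧ x0 = c ∧ x1 = 0 ∧ x2 = 0 ∧ x3 = -c * ξ))) :=
  stmt9_general q hodd K hcard ξ hξq hξns b hb hN1 hN2 r hr
end

section
/- Let q be a prime power and consider F_{q^6} with σ ∈ {q^2, q^4}. Suppose λ, α ∈ F_{q^6}, α ≠ 0, satisfy N_{q^6/q^3}(y) ≠ N_{q^6/q^3}(λ·y + α·y^σ) for all y ∈ F_{q^6}*. Then the multiplication x ⋆ y = (λ·y + α·y^σ)·x + y·x^{q^3} on F_{q^6} has no zero divisors: x ⋆ y = 0 with y ≠ 0 implies x = 0. -/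
/-!
Write `m = q³` and `c = λy + αy^σ`. If `x ≠ 0` and `c x = -y x^m`, raise both sides to the power
`m + 1`: since `x^(m²) = x` in `F_{m²}` and `(-1)^(m+1) = 1`, the powers of `x` on the two sides
agree, so `c^(m+1) = y^(m+1)`, i.e. `c` and `y` have the same norm down to `F_{q³}`.
-/

lemma FiniteField.neg_one_pow_eq_neg_one_of_card_eq_pow {L : Type*} [Field L] [Fintype L]
    {q n : ℕ} (hq : IsPrimePow q) (hL : Fintype.card L = q ^ n) : (-1 : L) ^ q = -1 := by
  obtain ⟨p, k, hp, -, rfl⟩ := hq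
  have := Fact.mk (Nat.prime_iff.mpr hp)
  have : CharP L p := charP_of_card_eq_prime_pow (f := k * n) (by rw [hL, ← pow_mul])
  exact neg_one_pow_char_pow L p k

lemma FiniteField.pow_succ_eq_of_mul_add_mul_pow_eq_zero {L : Type*} [Field L] [Fintype L]
    {m : ℕ} (hL : Fintype.card L = m ^ 2) (hneg : (-1 : L) ^ m = -1) {c x y : L} (hx : x ≠ 0)
    (h : c * x + y * x ^ m = 0) : c ^ (m + 1) = y ^ (m + 1) := by
  have hxm : (x ^ m) ^ m = x := by rw [← pow_mul, ← sq, ← hL, FiniteField.pow_card]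
  have hneg' : (-1 : L) ^ (m + 1) = 1 := by rw [pow_succ, hneg, neg_one_mul, neg_neg]
  have hcx : c * x = -1 * (y * x ^ m) := by linear_combination h
  refine mul_right_cancel₀ (pow_ne_zero (m + 1) hx) ?_
  calc c ^ (m + 1) * x ^ (m + 1) = (c * x) ^ (m + 1) := (mul_pow ..).symm
    _ = y ^ (m + 1) * ((x ^ m) ^ m * x ^ m) := by
      rw [hcx, mul_pow, mul_pow, hneg', one_mul, pow_succ (x ^ m)]
    _ = y ^ (m + 1) * x ^ (m + 1) := by rw [hxm, ← pow_succ']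

theorem stmt14_general (q : ℕ) (hq : IsPrimePow q)
    (L : Type*) [Field L] [Fintype L] (hL : Fintype.card L = q ^ 6)
    (σ : ℕ)
    (lam α : L)
    (hnorm : ∀ y : L, y ≠ 0 →
      y ^ (q ^ 3 + 1) ≠ (lam * y + α * y ^ σ) ^ (q ^ 3 + 1)) :
    ∀ x y : L, y ≠ 0 →
      (lam * y + α * y ^ σ) * x + y * x ^ q ^ 3 = 0 → x = 0 := by
  intro x y hy hxy
  by_contra hx
  have hL' : Fintype.card L = (q ^ 3) ^ 2 := by rw [hL, ← pow_mul]
  have hneg := FiniteField.neg_one_pow_eq_neg_one_of_card_eq_pow (hq.pow three_ne_zero) hL'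
  exact hnorm y hy
    (FiniteField.pow_succ_eq_of_mul_add_mul_pow_eq_zero hL' hneg hx hxy).symm

/-- the multiplication `x ⋆ y = (λy + αy^σ)x + y x^{q^3}` on
`F_{q^6}` has no zero divisors, under the norm condition. -/
theorem stmt14 (q : ℕ) (hq : IsPrimePow q)
    (L : Type*) [Field L] [Fintype L] (hL : Fintype.card L = q ^ 6)
    (σ : ℕ) (hσ : σ = q ^ 2 ∨ σ = q ^ 4)
    (lam α : L) (hα : α ≠ 0)
    (hnorm : ∀ y : L, y ≠ 0 →
      y ^ (q ^ 3 + 1) ≠ (lam * y + α * y ^ σ) ^ (q ^ 3 + 1)) :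
    ∀ x y : L, y ≠ 0 →
      (lam * y + α * y ^ σ) * x + y * x ^ q ^ 3 = 0 → x = 0 :=
  stmt14_general q hq L hL σ lam α hnorm
end

section
/- Let q be an odd prime power and suppose A, B, C, D ∈ F_{q^6} satisfy: A·(C - λD) = 0, B·(D^{q^3} - λ·C^{q^3}) = 0, A·(D·μ + C^{q^3}) = 0, B·(C^{q^3}·μ^{q^3} + D) = 0, with C^{q^3+1} ≠ D^{q^3+1}, (A,B) ≠ (0,0), (C,D) ≠ (0,0), and λ, μ ∈ F_{q^6}*. Then A = 0 or B = 0, and in either case N_{q^6/q^3}(μ) = N_{q^6/q^3}(λ). -/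
/-!
Write `σ x = x ^ q³`: since `|L| = (q³)²`, `σ` is an involution, it is multiplicative and it
commutes with negation, and `N(x) = x ^ (q³ + 1) = x · σ x`. If `A ≠ 0` and `B ≠ 0`, the first two
equations give `C = λ D` and `σ D = λ σ C`, so `N(C) = σ C · λ D = σ D · D = N(D)`, which is
excluded. If `B = 0`, then `C = λ D` and `D μ = -σ C`, and `N(D) N(μ) = (-σ C)(-C) = N(C) = N(λ) N(D)`.
The case `A = 0` is the image of the case `B = 0` under `σ`, with `(C, D, λ)` replaced by
`(D, C, σ λ)`.
-/

section CardEqSq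

variable {L : Type*} [Field L] [Fintype L] {k : ℕ}

theorem pow_pow_of_card_eq_sq (hL : Fintype.card L = k ^ 2) (x : L) : (x ^ k) ^ k = x := by
  rw [← pow_mul, ← sq, ← hL, FiniteField.pow_card]

theorem neg_one_pow_of_card_eq_sq (hL : Fintype.card L = k ^ 2) : (-1 : L) ^ k = -1 := by
  rcases Nat.even_or_odd k with hk | hk
  · have : CharP L 2 := ringChar.of_eq <| FiniteField.even_card_iff_char_two.mpr <| by
      rw [hL, ← Nat.even_iff]
      exact hk.pow_of_ne_zero two_ne_zero
    simp only [CharTwo.neg_eq, one_pow]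
  · exact hk.neg_one_pow

theorem neg_pow_of_card_eq_sq (hL : Fintype.card L = k ^ 2) (x : L) : (-x) ^ k = -x ^ k := by
  rw [neg_eq_neg_one_mul, mul_pow, neg_one_pow_of_card_eq_sq hL, neg_one_mul]

theorem pow_succ_eq_of_eq_mul_of_mul_eq_neg_pow (hL : Fintype.card L = k ^ 2) {C D lam mu : L}
    (hD : D ≠ 0) (hC : C = lam * D) (hDmu : D * mu = -C ^ k) :
    mu ^ (k + 1) = lam ^ (k + 1) := by
  have hDmu' : D ^ k * mu ^ k = -C := by
    rw [← mul_pow, hDmu, neg_pow_of_card_eq_sq hL, pow_pow_of_card_eq_sq hL]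
  refine mul_right_cancel₀ (pow_ne_zero (k + 1) hD) ?_
  calc mu ^ (k + 1) * D ^ (k + 1) = (D * mu) * (D ^ k * mu ^ k) := by ring
    _ = C * C ^ k := by rw [hDmu, hDmu', neg_mul_neg, mul_comm]
    _ = lam ^ (k + 1) * D ^ (k + 1) := by rw [hC]; ring

theorem pow_succ_eq_of_pow_eq_mul_of_pow_mul_eq_neg (hL : Fintype.card L = k ^ 2) {C D lam mu : L}
    (hC : C ≠ 0) (hD : D ^ k = lam * C ^ k) (hCmu : C ^ k * mu ^ k = -D) :
    mu ^ (k + 1) = lam ^ (k + 1) := by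
  have hD' : D = lam ^ k * C := by
    rw [← pow_pow_of_card_eq_sq hL D, hD, mul_pow, pow_pow_of_card_eq_sq hL]
  have hCmu' : C * mu = -D ^ k := by
    rw [← neg_pow_of_card_eq_sq hL, ← hCmu, mul_pow, pow_pow_of_card_eq_sq hL,
      pow_pow_of_card_eq_sq hL]
  rw [pow_succ_eq_of_eq_mul_of_mul_eq_neg_pow hL hC hD' hCmu', pow_succ,
    pow_pow_of_card_eq_sq hL, ← pow_succ']

end CardEqSq

theorem pow_succ_eq_pow_succ_of_eq_mul_of_pow_eq_mul {M : Type*} [CommMonoid M] {k : ℕ}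
    {C D lam : M} (hC : C = lam * D) (hD : D ^ k = lam * C ^ k) :
    C ^ (k + 1) = D ^ (k + 1) := by
  calc C ^ (k + 1) = C ^ k * (lam * D) := by rw [← hC, pow_succ]
    _ = lam * C ^ k * D := by ac_rfl
    _ = D ^ (k + 1) := by rw [← hD, pow_succ]

theorem stmt17_general (q : ℕ)
    (L : Type*) [Field L] [Fintype L] (hL : Fintype.card L = q ^ 6)
    (A B C D lam mu : L)
    (h1 : A * (C - lam * D) = 0)
    (h2 : B * (D ^ q ^ 3 - lam * C ^ q ^ 3) = 0)
    (h3 : A * (D * mu + C ^ q ^ 3) = 0)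
    (h4 : B * (C ^ q ^ 3 * mu ^ q ^ 3 + D) = 0)
    (hCD : C ^ (q ^ 3 + 1) ≠ D ^ (q ^ 3 + 1))
    (hAB : ¬ (A = 0 ∧ B = 0)) (hCD0 : ¬ (C = 0 ∧ D = 0)) :
    (A = 0 ∨ B = 0) ∧ mu ^ (q ^ 3 + 1) = lam ^ (q ^ 3 + 1) := by
  have hL' : Fintype.card L = (q ^ 3) ^ 2 := by rw [hL, ← pow_mul]
  by_cases hA : A = 0
  · have hB : B ≠ 0 := fun hB => hAB ⟨hA, hB⟩
    have hD : D ^ q ^ 3 = lam * C ^ q ^ 3 := sub_eq_zero.mp ((mul_eq_zero.mp h2).resolve_left hB)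
    have hC0 : C ≠ 0 := fun hC0 => hCD0 ⟨hC0, by
      rw [← pow_pow_of_card_eq_sq hL' D, hD, mul_pow, pow_pow_of_card_eq_sq hL', hC0, mul_zero]⟩
    exact ⟨Or.inl hA, pow_succ_eq_of_pow_eq_mul_of_pow_mul_eq_neg hL' hC0 hD
      (eq_neg_of_add_eq_zero_left ((mul_eq_zero.mp h4).resolve_left hB))⟩
  have hC : C = lam * D := sub_eq_zero.mp ((mul_eq_zero.mp h1).resolve_left hA)
  by_cases hB : B = 0
  · have hD0 : D ≠ 0 := fun hD0 => hCD0 ⟨by rw [hC, hD0, mul_zero], hD0⟩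
    exact ⟨Or.inr hB, pow_succ_eq_of_eq_mul_of_mul_eq_neg_pow hL' hD0 hC
      (eq_neg_of_add_eq_zero_left ((mul_eq_zero.mp h3).resolve_left hA))⟩
  exact absurd (pow_succ_eq_pow_succ_of_eq_mul_of_pow_eq_mul hC
    (sub_eq_zero.mp ((mul_eq_zero.mp h2).resolve_left hB))) hCD

/-- the key computation of Lemma 2.2: under the four product
equations and `C^{q^3+1} ≠ D^{q^3+1}`, one has `A = 0` or `B = 0`, and in
either case `N_{q^6/q^3}(μ) = N_{q^6/q^3}(λ)`. -/
theorem stmt17 (q : ℕ) (hq : IsPrimePow q) (hodd : Odd q)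
    (L : Type*) [Field L] [Fintype L] (hL : Fintype.card L = q ^ 6)
    (A B C D lam mu : L) (hlam : lam ≠ 0) (hmu : mu ≠ 0)
    (h1 : A * (C - lam * D) = 0)
    (h2 : B * (D ^ q ^ 3 - lam * C ^ q ^ 3) = 0)
    (h3 : A * (D * mu + C ^ q ^ 3) = 0)
    (h4 : B * (C ^ q ^ 3 * mu ^ q ^ 3 + D) = 0)
    (hCD : C ^ (q ^ 3 + 1) ≠ D ^ (q ^ 3 + 1))
    (hAB : ¬ (A = 0 ∧ B = 0)) (hCD0 : ¬ (C = 0 ∧ D = 0)) :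
    (A = 0 ∨ B = 0) ∧ mu ^ (q ^ 3 + 1) = lam ^ (q ^ 3 + 1) :=
  stmt17_general q L hL A B C D lam mu h1 h2 h3 h4 hCD hAB hCD0
end

section
/- Let q be an odd prime power, ξ a nonsquare in F_q, a ∈ F_{q^3}* with N_{q^3/q}(a) ∉ {-1, 1}, and r ∈ {1,2}. Let ⊥ be the polarity of PG(3,q^3) induced by the quadric X_0X_3 - X_1X_2 = 0 (bilinear form x_0y_3 + x_3y_0 - x_1y_2 - x_2y_1). With t_1 : {X_2 = -a^{q^r+1}X_1, X_3 = -ξ a^{q^r+1}X_0} and t_2 : {X_1 = a^{q^{3-r}}X_2, X_0 = (a^{q^{3-r}}/ξ)X_3}, one has t_1^⊥ ∩ t_2 = ∅. -/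
/-!
Testing against the points `(1,0,0,-ξA)` and `(0,1,-A,0)` of `t_1`, with `A = a^(q^r+1)`,
shows that `t_1^⊥` is `{X_3 = ξ A X_0, X_2 = A X_1}`. Combined with the equations of `t_2`
(slope `B = a^(q^(3-r))`), each coordinate pair is scaled by `A B = N(a) ≠ 1` onto itself,
so it vanishes.
-/

theorem pow_pow_add_one_mul_pow_pow_three_sub {M : Type*} [Monoid M] (a : M) (q : ℕ) {r : ℕ}
    (hr : r = 1 ∨ r = 2) : a ^ (q ^ r + 1) * a ^ q ^ (3 - r) = a ^ (1 + q + q ^ 2) := by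
  rw [← pow_add]
  rcases hr with rfl | rfl <;> ring_nf

theorem eq_mul_of_forall_orthogonal {R : Type*} [CommRing R] {ξ A x0 x1 x2 x3 : R}
    (hperp : ∀ y0 y1 y2 y3 : R, (y2 = -A * y1 ∧ y3 = -ξ * A * y0) →
      x0 * y3 + x3 * y0 - x1 * y2 - x2 * y1 = 0) :
    x3 = ξ * A * x0 ∧ x2 = A * x1 := by
  have h₀ := hperp 1 0 0 (-ξ * A) ⟨by ring, by ring⟩
  have h₁ := hperp 0 1 (-A) 0 ⟨by ring, by ring⟩
  exact ⟨by linear_combination h₀, by linear_combination -h₁⟩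

theorem eq_zero_of_eq_mul_of_eq_mul {K : Type*} [Field K] {x y c d : K}
    (hx : x = c * y) (hy : y = d * x) (hcd : c * d ≠ 1) : x = 0 ∧ y = 0 := by
  have hx0 : x = 0 := by
    have : x * (1 - c * d) = 0 := by linear_combination hx + c * hy
    exact (mul_eq_zero.mp this).resolve_right (sub_ne_zero.mpr hcd.symm)
  exact ⟨hx0, by rw [hy, hx0, mul_zero]⟩

-- For `ξ = 0` the product is `0` because `d / 0 = 0`.
theorem mul_mul_div_ne_one {K : Type*} [Field K] (ξ : K) {c d : K} (hcd : c * d ≠ 1) :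
    ξ * c * (d / ξ) ≠ 1 := by
  rcases eq_or_ne ξ 0 with rfl | hξ
  · simp
  · rwa [show ξ * c * (d / ξ) = c * d by field_simp]

theorem stmt18_general (q : ℕ) (K : Type*) [Field K] (ξ : K) (a : K)
    (hN1 : a ^ (1 + q + q ^ 2) ≠ 1) (r : ℕ) (hr : r = 1 ∨ r = 2) :
    ∀ x0 x1 x2 x3 : K, ¬ (x0 = 0 ∧ x1 = 0 ∧ x2 = 0 ∧ x3 = 0) →
      -- (x0,x1,x2,x3) lies on t_1^⊥
      (∀ y0 y1 y2 y3 : K,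
        (y2 = -a ^ (q ^ r + 1) * y1 ∧ y3 = -ξ * a ^ (q ^ r + 1) * y0) →
        x0 * y3 + x3 * y0 - x1 * y2 - x2 * y1 = 0) →
      -- then it does not lie on t_2
      ¬ (x1 = a ^ q ^ (3 - r) * x2 ∧ x0 = a ^ q ^ (3 - r) / ξ * x3) := by
  rintro x0 x1 x2 x3 hne hperp ⟨h1, h0⟩
  obtain ⟨h3, h2⟩ := eq_mul_of_forall_orthogonal hperp
  have hAB : a ^ (q ^ r + 1) * a ^ q ^ (3 - r) ≠ 1 := by
    rwa [pow_pow_add_one_mul_pow_pow_three_sub a q hr]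
  obtain ⟨rfl, rfl⟩ := eq_zero_of_eq_mul_of_eq_mul h2 h1 hAB
  obtain ⟨rfl, rfl⟩ := eq_zero_of_eq_mul_of_eq_mul h3 h0 (mul_mul_div_ne_one ξ hAB)
  exact hne ⟨rfl, rfl, rfl, rfl⟩

/-- with respect to the polarity of the quadric
`X_0X_3 - X_1X_2 = 0`, the polar line of `t_1` is disjoint from `t_2`. -/
theorem stmt18 (q : ℕ) (hq : IsPrimePow q) (hodd : Odd q)
    (K : Type*) [Field K] [Fintype K] (hcard : Fintype.card K = q ^ 3)
    (ξ : K) (hξq : ξ ^ q = ξ) (hξns : ¬ ∃ c : K, c ^ q = c ∧ c ^ 2 = ξ)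
    (a : K) (ha : a ≠ 0)
    (hN1 : a ^ (1 + q + q ^ 2) ≠ 1) (hN2 : a ^ (1 + q + q ^ 2) ≠ -1)
    (r : ℕ) (hr : r = 1 ∨ r = 2) :
    ∀ x0 x1 x2 x3 : K, ¬ (x0 = 0 ∧ x1 = 0 ∧ x2 = 0 ∧ x3 = 0) →
      -- (x0,x1,x2,x3) lies on t_1^⊥
      (∀ y0 y1 y2 y3 : K,
        (y2 = -a ^ (q ^ r + 1) * y1 ∧ y3 = -ξ * a ^ (q ^ r + 1) * y0) →
        x0 * y3 + x3 * y0 - x1 * y2 - x2 * y1 = 0) →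
      -- then it does not lie on t_2
      ¬ (x1 = a ^ q ^ (3 - r) * x2 ∧ x0 = a ^ q ^ (3 - r) / ξ * x3) :=
  stmt18_general q K ξ a hN1 r hr
end
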